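/- arXiv:2510.16311 — 3 statements merged into one kernel-verified Lean document; each statement's English description precedes it below -/
import Mathlib

section
/- Monotonic entropy response (Theorem 1): for differentiable eigenvalue curves λ_k(q), the Von Neumann entropy H(q) = β·E_{p(q)}[λ(q)] + log Z(q) of the Gibbs distribution satisfies dH/dq = -β²·Cov_{p(q)}(λ(q), λ̇(q)). In particular, H is decreasing at q whenever the eigenvalues are positively correlated with their q-sensitivities under the Gibbs measure, and increasing whenever the correlation is negative. -/
/-!
Writing `p_k = exp (-β λ_k - log Z)`, the entropy of the Gibbs distribution is
`H = β ⟨λ⟩ + log Z`. Differentiating, `(log Z)' = -β ⟨λ̇⟩` and `ṗ_k = -β p_k (λ̇_k - ⟨λ̇⟩)`, so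
`⟨λ⟩' = ⟨λ̇⟩ - β Cov(λ, λ̇)`; the two `⟨λ̇⟩` terms cancel in `H'`, leaving `-β² Cov(λ, λ̇)`.
-/

open Real Finset

namespace Gibbs

variable {ι : Type*} [Fintype ι]

noncomputable def weight (β : ℝ) (E : ι → ℝ) (k : ι) : ℝ :=
  exp (-β * E k) / ∑ j, exp (-β * E j)

variable [Nonempty ι]

theorem partition_pos (β : ℝ) (E : ι → ℝ) : 0 < ∑ j, exp (-β * E j) :=
  sum_pos (fun _ _ => exp_pos _) univ_nonempty

theorem sum_weight (β : ℝ) (E : ι → ℝ) : ∑ k, weight β E k = 1 := by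
  simp only [weight, ← sum_div, div_self (partition_pos β E).ne']

theorem weight_eq_exp (β : ℝ) (E : ι → ℝ) (k : ι) :
    weight β E k = exp (-β * E k - log (∑ j, exp (-β * E j))) := by
  rw [exp_sub, exp_log (partition_pos β E), weight]

theorem entropy_eq (β : ℝ) (E : ι → ℝ) :
    -∑ k, weight β E k * log (weight β E k) =
      β * ∑ k, weight β E k * E k + log (∑ j, exp (-β * E j)) := by
  have hlog (k : ι) : log (weight β E k) = -β * E k - log (∑ j, exp (-β * E j)) := by
    rw [weight_eq_exp, log_exp]
  simp only [hlog]
  calc -∑ k, weight β E k * (-β * E k - log (∑ j, exp (-β * E j)))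
      = ∑ k, (β * (weight β E k * E k) + weight β E k * log (∑ j, exp (-β * E j))) := by
        rw [← sum_neg_distrib]
        exact sum_congr rfl fun k _ => by ring
    _ = β * ∑ k, weight β E k * E k + (∑ k, weight β E k) * log (∑ j, exp (-β * E j)) := by
        rw [sum_add_distrib, mul_sum, sum_mul]
    _ = _ := by rw [sum_weight, one_mul]

variable (β : ℝ) {E : ℝ → ι → ℝ} {E' : ι → ℝ} {q : ℝ}

theorem hasDerivAt_log_partition (hE : ∀ k, HasDerivAt (E · k) (E' k) q) :
    HasDerivAt (fun q => log (∑ j, exp (-β * E q j)))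
      (-β * ∑ k, weight β (E q) k * E' k) q := by
  have hZ := HasDerivAt.fun_sum fun k (_ : k ∈ univ) => ((hE k).const_mul (-β)).exp
  refine (hZ.log (partition_pos β (E q)).ne').congr_deriv ?_
  simp only [weight, mul_sum, sum_div]
  exact sum_congr rfl fun k _ => by ring

theorem hasDerivAt_weight (hE : ∀ k, HasDerivAt (E · k) (E' k) q) (k : ι) :
    HasDerivAt (fun q => weight β (E q) k)
      (-β * weight β (E q) k * (E' k - ∑ j, weight β (E q) j * E' j)) q := by
  have h := (((hE k).const_mul (-β)).sub (hasDerivAt_log_partition β hE)).exp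
  simp only [Pi.sub_apply, ← weight_eq_exp] at h
  convert h using 1
  ring

theorem hasDerivAt_mean (hE : ∀ k, HasDerivAt (E · k) (E' k) q) :
    HasDerivAt (fun q => ∑ k, weight β (E q) k * E q k)
      (∑ k, weight β (E q) k * E' k - β * (∑ k, weight β (E q) k * (E q k * E' k) -
        (∑ k, weight β (E q) k * E q k) * ∑ k, weight β (E q) k * E' k)) q := by
  refine (HasDerivAt.fun_sum fun k (_ : k ∈ univ) =>
    (hasDerivAt_weight β hE k).mul (hE k)).congr_deriv ?_
  set m' := ∑ j, weight β (E q) j * E' j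
  rw [sum_mul, ← sum_sub_distrib, mul_sum, ← sum_sub_distrib]
  exact sum_congr rfl fun k _ => by ring

theorem hasDerivAt_entropy (hE : ∀ k, HasDerivAt (E · k) (E' k) q) :
    HasDerivAt (fun q => -∑ k, weight β (E q) k * log (weight β (E q) k))
      (-β ^ 2 * (∑ k, weight β (E q) k * (E q k * E' k) -
        (∑ k, weight β (E q) k * E q k) * ∑ k, weight β (E q) k * E' k)) q := by
  simp only [entropy_eq β]
  exact (((hasDerivAt_mean β hE).const_mul β).add
    (hasDerivAt_log_partition β hE)).congr_deriv (by ring)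

end Gibbs

/-- Monotonic entropy response: for differentiable eigenvalue curves `λ_k(q)`, the Von
Neumann entropy `H(q) = -Σ_k p_k(q) log p_k(q)` of the Gibbs distribution satisfies
`dH/dq = -β²·Cov_{p(q)}(λ(q), λ̇(q))`. In particular `H` is decreasing at `q` when the
covariance is positive and increasing when it is negative. -/
theorem monotonic_entropy_response
    (n : ℕ) (hn : 0 < n) (β : ℝ) (hβ : 0 < β)
    (lam lam' : Fin n → ℝ → ℝ)
    (hderiv : ∀ k q, HasDerivAt (lam k) (lam' k q) q)
    (Z : ℝ → ℝ) (hZ : ∀ q, Z q = ∑ k, Real.exp (-β * lam k q))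
    (p : Fin n → ℝ → ℝ) (hp : ∀ k q, p k q = Real.exp (-β * lam k q) / Z q)
    (Cov : ℝ → ℝ)
    (hCov : ∀ q, Cov q = (∑ k, p k q * (lam k q * lam' k q)) -
      (∑ k, p k q * lam k q) * (∑ k, p k q * lam' k q)) :
    ∀ q, HasDerivAt (fun q' => -∑ k, p k q' * Real.log (p k q'))
        (-β ^ 2 * Cov q) q ∧
      (0 < Cov q → -β ^ 2 * Cov q < 0) ∧
      (Cov q < 0 → 0 < -β ^ 2 * Cov q) := by
  intro q
  have : Nonempty (Fin n) := Fin.pos_iff_nonempty.mp hn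
  have hp_weight : p = fun k q => Gibbs.weight β (fun j => lam j q) k := by
    funext k q
    rw [hp, hZ, Gibbs.weight]
  subst hp_weight
  have hβ2 : 0 < β ^ 2 := pow_pos hβ 2
  refine ⟨?_, fun h => by nlinarith, fun h => by nlinarith⟩
  rw [hCov]
  exact Gibbs.hasDerivAt_entropy β (E := fun q k => lam k q) fun k => hderiv k q
end

section
/- Bounded entropy variation (Theorem 2, eigenvalue version): suppose λ_k : ℝ → ℝ are continuously differentiable for k = 1,...,n, and let H(q) = -Σ_k p_k(q) log p_k(q) with p_k(q) = exp(-βλ_k(q))/Σ_j exp(-βλ_j(q)). If for some interval [q, q+Δq] the derivative vectors satisfy ‖λ̇(ξ)‖₂ ≤ C for all ξ in the interval, then |H(q+Δq) - H(q)| ≤ β²·σ_max·C·|Δq|, where σ_max = sup_{ξ∈[q,q+Δq]} σ_{p(ξ)}(λ(ξ)) is the supremum of the Gibbs standard deviation of the eigenvalues. -/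
/-!
Write `Z = ∑ₖ exp (-β λₖ)` and `⟨·⟩` for the mean under the Gibbs weights `p`. Since
`log pₖ = -β λₖ - log Z`, the entropy is `H = β ⟨λ⟩ + log Z`, and differentiating gives
`dH/dq = -β² Cov_p(λ, λ̇)`. Weighted Cauchy–Schwarz bounds the covariance by `σ_p(λ) σ_p(λ̇)`,
and `σ_p(λ̇)² ≤ ⟨λ̇²⟩ ≤ ‖λ̇‖₂²`. The mean value inequality on `[q, q + Δq]` concludes.
-/

open Finset Real

section WeightedMoments

variable {ι : Type*} [Fintype ι]

def weightedMean (w a : ι → ℝ) : ℝ := ∑ k, w k * a k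

def weightedCov (w a b : ι → ℝ) : ℝ :=
  ∑ k, w k * ((a k - weightedMean w a) * (b k - weightedMean w b))

def weightedVar (w a : ι → ℝ) : ℝ := ∑ k, w k * (a k - weightedMean w a) ^ 2

variable {w : ι → ℝ} (a b : ι → ℝ)

theorem weightedVar_eq_weightedCov : weightedVar w a = weightedCov w a a := by
  simp only [weightedVar, weightedCov, sq]

theorem weightedVar_nonneg (hw : ∀ k, 0 ≤ w k) : 0 ≤ weightedVar w a :=
  sum_nonneg fun k _ => mul_nonneg (hw k) (sq_nonneg _)

theorem weightedCov_eq (hw : ∑ k, w k = 1) :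
    weightedCov w a b = weightedMean w (a * b) - weightedMean w a * weightedMean w b := by
  have hexpand : ∀ k, w k * ((a k - weightedMean w a) * (b k - weightedMean w b)) =
      w k * (a k * b k) - weightedMean w b * (w k * a k) - weightedMean w a * (w k * b k)
        + weightedMean w a * weightedMean w b * w k := fun k => by ring
  rw [weightedCov, sum_congr rfl fun k _ => hexpand k]
  simp only [sum_add_distrib, sum_sub_distrib, ← mul_sum, hw]
  simp only [weightedMean, Pi.mul_apply]
  ring

theorem abs_weightedCov_le (hw : ∀ k, 0 ≤ w k) :
    |weightedCov w a b| ≤ √(weightedVar w a) * √(weightedVar w b) := by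
  rw [← sqrt_mul (weightedVar_nonneg a hw), ← sqrt_sq_eq_abs]
  refine sqrt_le_sqrt (sum_sq_le_sum_mul_sum_of_sq_le_mul _ (fun k _ => ?_) (fun k _ => ?_)
    fun k _ => le_of_eq (by ring))
  all_goals exact mul_nonneg (hw k) (sq_nonneg _)

theorem weightedVar_le_sum_sq (hw : ∀ k, 0 ≤ w k) (hw1 : ∑ k, w k = 1) :
    weightedVar w a ≤ ∑ k, a k ^ 2 := by
  have hmean_sq : weightedMean w (a * a) ≤ ∑ k, a k ^ 2 := sum_le_sum fun k _ => by
    have hwk : w k ≤ 1 := hw1 ▸ single_le_sum (fun j _ => hw j) (mem_univ k)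
    rw [Pi.mul_apply, ← sq]
    exact mul_le_of_le_one_left (sq_nonneg _) hwk
  rw [weightedVar_eq_weightedCov, weightedCov_eq a a hw1]
  nlinarith [sq_nonneg (weightedMean w a)]

theorem abs_weightedCov_le_sqrt_weightedVar_mul_sqrt_sum_sq (hw : ∀ k, 0 ≤ w k)
    (hw1 : ∑ k, w k = 1) :
    |weightedCov w a b| ≤ √(weightedVar w a) * √(∑ k, b k ^ 2) :=
  (abs_weightedCov_le a b hw).trans <|
    mul_le_mul_of_nonneg_left (sqrt_le_sqrt (weightedVar_le_sum_sq b hw hw1)) (sqrt_nonneg _)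

end WeightedMoments

noncomputable section Gibbs

variable {ι : Type*} [Fintype ι] (β : ℝ)

def partitionFn (x : ι → ℝ) : ℝ := ∑ k, exp (-β * x k)

def gibbs (x : ι → ℝ) (k : ι) : ℝ := exp (-β * x k) / partitionFn β x

def gibbsEntropy (x : ι → ℝ) : ℝ := -∑ k, gibbs β x k * log (gibbs β x k)

variable [Nonempty ι] (x : ι → ℝ)

theorem partitionFn_pos : 0 < partitionFn β x :=
  sum_pos (fun _ _ => exp_pos _) univ_nonempty

theorem gibbs_pos (k : ι) : 0 < gibbs β x k :=
  div_pos (exp_pos _) (partitionFn_pos β x)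

theorem sum_gibbs : ∑ k, gibbs β x k = 1 := by
  simp only [gibbs, ← sum_div]
  exact div_self (partitionFn_pos β x).ne'

theorem partitionFn_mul_weightedMean_gibbs (f : ι → ℝ) :
    partitionFn β x * weightedMean (gibbs β x) f = ∑ k, f k * exp (-β * x k) := by
  have hZ := (partitionFn_pos β x).ne'
  simp only [weightedMean, gibbs, mul_sum]
  refine sum_congr rfl fun _ _ => ?_
  field_simp

theorem gibbsEntropy_eq :
    gibbsEntropy β x = β * weightedMean (gibbs β x) x + log (partitionFn β x) := by
  have hlog : ∀ k, log (gibbs β x k) = -β * x k - log (partitionFn β x) := fun k => by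
    rw [gibbs, log_div (exp_ne_zero _) (partitionFn_pos β x).ne', log_exp]
  have hterm : ∀ k, gibbs β x k * log (gibbs β x k) =
      -(β * (gibbs β x k * x k)) - log (partitionFn β x) * gibbs β x k := fun k => by
    rw [hlog]; ring
  simp only [gibbsEntropy, hterm, sum_sub_distrib, sum_neg_distrib, ← mul_sum, sum_gibbs,
    weightedMean]
  ring

theorem continuous_gibbs (k : ι) :
    Continuous fun x : ι → ℝ => gibbs β x k :=
  Continuous.div (by fun_prop) (by unfold partitionFn; fun_prop) fun x => (partitionFn_pos β x).ne'

theorem continuous_weightedVar_gibbs :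
    Continuous fun x : ι → ℝ => weightedVar (gibbs β x) x := by
  have := continuous_gibbs (ι := ι) β
  unfold weightedVar weightedMean
  fun_prop

end Gibbs

section GibbsDerivatives

variable {ι : Type*} [Fintype ι] [Nonempty ι] (β : ℝ) {x : ℝ → ι → ℝ} {x' : ι → ℝ} {t : ℝ}

theorem hasDerivAt_partitionFn (hx : ∀ k, HasDerivAt (fun s => x s k) (x' k) t) :
    HasDerivAt (fun s => partitionFn β (x s))
      (-β * (partitionFn β (x t) * weightedMean (gibbs β (x t)) x')) t := by
  rw [partitionFn_mul_weightedMean_gibbs, mul_sum]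
  exact HasDerivAt.fun_sum fun k _ => ((hx k).const_mul (-β)).exp.congr_deriv (by ring)

theorem hasDerivAt_weightedMean_gibbs (hx : ∀ k, HasDerivAt (fun s => x s k) (x' k) t) :
    HasDerivAt (fun s => weightedMean (gibbs β (x s)) (x s))
      (weightedMean (gibbs β (x t)) x' - β * weightedCov (gibbs β (x t)) (x t) x') t := by
  have hF : HasDerivAt (fun s => ∑ k, x s k * exp (-β * x s k))
      (partitionFn β (x t) * weightedMean (gibbs β (x t)) x'
        - β * (partitionFn β (x t) * weightedMean (gibbs β (x t)) (x t * x'))) t := by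
    rw [partitionFn_mul_weightedMean_gibbs, partitionFn_mul_weightedMean_gibbs, mul_sum,
      ← sum_sub_distrib]
    exact HasDerivAt.fun_sum fun k _ =>
      ((hx k).fun_mul ((hx k).const_mul (-β)).exp).congr_deriv (by rw [Pi.mul_apply]; ring)
  have hmean : (fun s => weightedMean (gibbs β (x s)) (x s)) =
      fun s => (∑ k, x s k * exp (-β * x s k)) / partitionFn β (x s) := funext fun s => by
    rw [← partitionFn_mul_weightedMean_gibbs, mul_div_cancel_left₀ _ (partitionFn_pos β _).ne']
  have hZ := (partitionFn_pos β (x t)).ne'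
  rw [hmean]
  refine (hF.div (hasDerivAt_partitionFn β hx) hZ).congr_deriv ?_
  rw [weightedCov_eq _ _ (sum_gibbs β _), ← partitionFn_mul_weightedMean_gibbs β (x t) (x t)]
  field_simp
  ring

theorem hasDerivAt_gibbsEntropy (hx : ∀ k, HasDerivAt (fun s => x s k) (x' k) t) :
    HasDerivAt (fun s => gibbsEntropy β (x s))
      (-β ^ 2 * weightedCov (gibbs β (x t)) (x t) x') t := by
  simp only [gibbsEntropy_eq]
  refine (((hasDerivAt_weightedMean_gibbs β hx).const_mul β).add
    ((hasDerivAt_partitionFn β hx).log (partitionFn_pos β _).ne')).congr_deriv ?_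
  field_simp [(partitionFn_pos β (x t)).ne']
  ring

end GibbsDerivatives

open Set in
theorem bounded_entropy_variation_general
    (n : ℕ) (hn : 0 < n) (β : ℝ)
    (lam lam' : Fin n → ℝ → ℝ)
    (hderiv : ∀ k ξ, HasDerivAt (lam k) (lam' k ξ) ξ)
    (q Δq : ℝ) (hΔq : 0 < Δq)
    (p : Fin n → ℝ → ℝ)
    (hp : ∀ k ξ, p k ξ = Real.exp (-β * lam k ξ) / ∑ j, Real.exp (-β * lam j ξ))
    (H : ℝ → ℝ) (hH : ∀ ξ, H ξ = -∑ k, p k ξ * Real.log (p k ξ))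
    (σ : ℝ → ℝ)
    (hσ : ∀ ξ, σ ξ = Real.sqrt (∑ k, p k ξ * (lam k ξ - ∑ j, p j ξ * lam j ξ) ^ 2))
    (C : ℝ)
    (hC : ∀ ξ ∈ Icc q (q + Δq), Real.sqrt (∑ k, lam' k ξ ^ 2) ≤ C)
    (σmax : ℝ) (hσmax : σmax = sSup (σ '' Icc q (q + Δq))) :
    |H (q + Δq) - H q| ≤ β ^ 2 * σmax * C * |Δq| := by
  have : Nonempty (Fin n) := Fin.pos_iff_nonempty.mp hn
  set x : ℝ → Fin n → ℝ := fun ξ k => lam k ξ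
  have hpx : ∀ ξ, (p · ξ) = gibbs β (x ξ) := fun ξ => funext fun k => hp k ξ
  have hHx : ∀ ξ, H ξ = gibbsEntropy β (x ξ) := fun ξ => by rw [hH, gibbsEntropy, ← hpx]
  have hσx : σ = fun ξ => √(weightedVar (gibbs β (x ξ)) (x ξ)) :=
    funext fun ξ => by rw [hσ, ← hpx]; rfl
  have hσle : ∀ ξ ∈ Icc q (q + Δq), σ ξ ≤ σmax := by
    have hx : Continuous x := continuous_pi fun k => continuous_iff_continuousAt.mpr
      fun ξ => (hderiv k ξ).continuousAt
    have hσc : Continuous σ := hσx ▸ ((continuous_weightedVar_gibbs β).comp hx).sqrt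
    exact hσmax ▸ fun ξ hξ => le_csSup (isCompact_Icc.image hσc).bddAbove (mem_image_of_mem σ hξ)
  have hbound : ∀ ξ ∈ Icc q (q + Δq),
      ‖-β ^ 2 * weightedCov (gibbs β (x ξ)) (x ξ) (lam' · ξ)‖ ≤ β ^ 2 * σmax * C := by
    intro ξ hξ
    have hσξ : 0 ≤ σ ξ := hσx ▸ sqrt_nonneg _
    rw [norm_mul, norm_neg, norm_pow, norm_eq_abs, sq_abs, mul_assoc]
    gcongr
    calc |weightedCov (gibbs β (x ξ)) (x ξ) (lam' · ξ)|
        ≤ σ ξ * √(∑ k, lam' k ξ ^ 2) := hσx ▸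
          abs_weightedCov_le_sqrt_weightedVar_mul_sqrt_sum_sq _ _
            (fun k => (gibbs_pos β _ k).le) (sum_gibbs β _)
      _ ≤ σmax * C := mul_le_mul (hσle ξ hξ) (hC ξ hξ) (sqrt_nonneg _) (hσξ.trans (hσle ξ hξ))
  have hmvt := Convex.norm_image_sub_le_of_norm_hasDerivWithin_le
    (fun ξ _ => (hasDerivAt_gibbsEntropy β fun k => hderiv k ξ).hasDerivWithinAt) hbound
    (convex_Icc q (q + Δq)) (left_mem_Icc.mpr (by linarith)) (right_mem_Icc.mpr (by linarith))
  simpa only [hHx, norm_eq_abs, add_sub_cancel_left] using hmvt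

open Set in
/-- Bounded entropy variation (eigenvalue version): if the eigenvalue curves `λ_k` are C¹
and `‖λ̇(ξ)‖₂ ≤ C` on `[q, q+Δq]`, then the Gibbs entropy satisfies
`|H(q+Δq) - H(q)| ≤ β²·σ_max·C·|Δq|`, where `σ_max` is the supremum over the interval of
the Gibbs standard deviation of the eigenvalues. -/
theorem bounded_entropy_variation
    (n : ℕ) (hn : 0 < n) (β : ℝ) (hβ : 0 < β)
    (lam lam' : Fin n → ℝ → ℝ)
    (hderiv : ∀ k ξ, HasDerivAt (lam k) (lam' k ξ) ξ)
    (hcont : ∀ k, Continuous (lam' k))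
    (q Δq : ℝ) (hΔq : 0 < Δq)
    (p : Fin n → ℝ → ℝ)
    (hp : ∀ k ξ, p k ξ = Real.exp (-β * lam k ξ) / ∑ j, Real.exp (-β * lam j ξ))
    (H : ℝ → ℝ) (hH : ∀ ξ, H ξ = -∑ k, p k ξ * Real.log (p k ξ))
    (σ : ℝ → ℝ)
    (hσ : ∀ ξ, σ ξ = Real.sqrt (∑ k, p k ξ * (lam k ξ - ∑ j, p j ξ * lam j ξ) ^ 2))
    (C : ℝ)
    (hC : ∀ ξ ∈ Icc q (q + Δq), Real.sqrt (∑ k, lam' k ξ ^ 2) ≤ C)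
    (σmax : ℝ) (hσmax : σmax = sSup (σ '' Icc q (q + Δq))) :
    |H (q + Δq) - H q| ≤ β ^ 2 * σmax * C * |Δq| :=
  bounded_entropy_variation_general n hn β lam lam' hderiv q Δq hΔq p hp H hH σ hσ C hC σmax hσmax
end

section
/- Hoffman–Wielandt-type consequence: if L and L' are n×n Hermitian matrices with eigenvalues λ_1 ≤ ... ≤ λ_n and λ'_1 ≤ ... ≤ λ'_n listed in nondecreasing order, then Σ_k (λ_k - λ'_k)² ≤ ‖L - L'‖_F², where ‖·‖_F is the Frobenius norm. -/
/-!
Conjugating by eigenvector unitaries `U`, `V` of `L`, `L'` turns `L - L'` into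
`diag λ * W - W * diag λ'` with `W = Uᴴ V` unitary, whose squared Frobenius norm is
`∑ i j, |W i j|² (λ i - λ' j)²`. Since `(|W i j|²)` is doubly stochastic, Birkhoff's theorem bounds
this linear function of it below by its value `∑ i, (λ i - λ' (σ i))²` at some permutation matrix,
and by the rearrangement inequality the sorted pairing minimises that over `σ`.
-/

open Finset Matrix

theorem Monovary.sum_sub_sq_le_sum_sub_comp_perm_sq {ι : Type*} [Fintype ι] {f g : ι → ℝ}
    (hfg : Monovary f g) (σ : Equiv.Perm ι) :
    ∑ i, (f i - g i) ^ 2 ≤ ∑ i, (f i - g (σ i)) ^ 2 := by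
  have hcross : ∑ i, f i * g (σ i) ≤ ∑ i, f i * g i := hfg.sum_mul_comp_perm_le_sum_mul
  have hsq : ∑ i, g (σ i) ^ 2 = ∑ i, g i ^ 2 := Equiv.sum_comp σ (g · ^ 2)
  have expand : ∀ h : ι → ℝ,
      ∑ i, (f i - h i) ^ 2 = ∑ i, f i ^ 2 - 2 * ∑ i, f i * h i + ∑ i, h i ^ 2 := fun h => by
    rw [mul_sum, ← sum_sub_distrib, ← sum_add_distrib]
    exact sum_congr rfl fun i _ => by ring
  rw [expand g, expand (fun i => g (σ i))]
  linarith

theorem Monotone.eq_of_map_univ_val_eq {α : Type*} [LinearOrder α] {n : ℕ} {f g : Fin n → α}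
    (hf : Monotone f) (hg : Monotone g) (h : univ.val.map f = univ.val.map g) : f = g := by
  rw [Fin.univ_val_map, Fin.univ_val_map] at h
  exact List.ofFn_injective <| (Multiset.coe_eq_coe.mp h).eq_of_sortedLE
    (List.sortedLE_ofFn_iff.mpr hf) (List.sortedLE_ofFn_iff.mpr hg)

theorem exists_perm_eq_comp_of_map_univ_val_eq {α : Type*} [LinearOrder α] {n : ℕ}
    {f g : Fin n → α} (h : univ.val.map f = univ.val.map g) :
    ∃ σ : Equiv.Perm (Fin n), f = g ∘ σ := by
  have hsorted : f ∘ Tuple.sort f = g ∘ Tuple.sort g := by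
    refine (Tuple.monotone_sort f).eq_of_map_univ_val_eq (Tuple.monotone_sort g) ?_
    rw [← Multiset.map_map, ← Multiset.map_map, Multiset.map_univ_val_equiv,
      Multiset.map_univ_val_equiv, h]
  refine ⟨(Tuple.sort f).symm.trans (Tuple.sort g), funext fun i => ?_⟩
  simpa using congrFun hsorted ((Tuple.sort f).symm i)

theorem exists_perm_sum_le_sum_mul_of_mem_doublyStochastic {R n : Type*} [Field R] [LinearOrder R]
    [IsStrictOrderedRing R] [Fintype n] [DecidableEq n] {S : Matrix n n R}
    (hS : S ∈ doublyStochastic R n) (c : n → n → R) :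
    ∃ σ : Equiv.Perm n, ∑ i, c i (σ i) ≤ ∑ i, ∑ j, S i j * c i j := by
  let φ : Matrix n n R →ₗ[R] R :=
    { toFun := fun M => ∑ i, ∑ j, M i j * c i j
      map_add' := fun M N => by simp only [Matrix.add_apply, add_mul, sum_add_distrib]
      map_smul' := fun r M => by
        simp only [Matrix.smul_apply, smul_eq_mul, mul_sum, mul_assoc, RingHom.id_apply] }
  rw [← SetLike.mem_coe, doublyStochastic_eq_convexHull_permMatrix] at hS
  obtain ⟨_, ⟨σ, rfl⟩, hσ⟩ :=
    (φ.concaveOn convex_univ).exists_le_of_mem_convexHull (Set.subset_univ _) hS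
  refine ⟨σ, le_of_eq_of_le ?_ hσ⟩
  simp [φ, Equiv.Perm.permMatrix, PEquiv.toMatrix_apply]

namespace Matrix

variable {𝕜 m n : Type*} [RCLike 𝕜] [Fintype m] [Fintype n]

theorem trace_conjTranspose_mul_self_eq_sum_sq_norm (M : Matrix m n 𝕜) :
    (Mᴴ * M).trace = ((∑ i, ∑ j, ‖M i j‖ ^ 2 : ℝ) : 𝕜) := by
  simp only [trace, diag_apply, mul_apply, conjTranspose_apply, RCLike.star_def, RCLike.conj_mul]
  push_cast
  exact sum_comm

theorem sum_sq_norm_unitary_mul_mul_star_unitary [DecidableEq m] [DecidableEq n]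
    {U : Matrix m m 𝕜} {V : Matrix n n 𝕜} (hU : U ∈ unitaryGroup m 𝕜)
    (hV : V ∈ unitaryGroup n 𝕜) (M : Matrix m n 𝕜) :
    ∑ i, ∑ j, ‖(U * M * star V) i j‖ ^ 2 = ∑ i, ∑ j, ‖M i j‖ ^ 2 := by
  have htrace : ((U * M * star V)ᴴ * (U * M * star V)).trace = (Mᴴ * M).trace := by
    simp only [conjTranspose_mul, ← star_eq_conjTranspose, star_star, Matrix.mul_assoc]
    rw [← Matrix.mul_assoc (star U), mem_unitaryGroup_iff'.mp hU, Matrix.one_mul, trace_mul_comm V]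
    simp only [Matrix.mul_assoc, mem_unitaryGroup_iff'.mp hV, Matrix.mul_one]
  exact_mod_cast (trace_conjTranspose_mul_self_eq_sum_sq_norm _).symm.trans
    (htrace.trans (trace_conjTranspose_mul_self_eq_sum_sq_norm M))

theorem of_sq_norm_mem_doublyStochastic [DecidableEq n] {W : Matrix n n 𝕜}
    (hW : W ∈ unitaryGroup n 𝕜) : of (fun i j => ‖W i j‖ ^ 2) ∈ doublyStochastic ℝ n := by
  refine mem_doublyStochastic_iff_sum.mpr ⟨fun i j => sq_nonneg _, fun i => ?_, fun j => ?_⟩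
  · have hrow := congrFun (congrFun (mem_unitaryGroup_iff.mp hW) i) i
    simp only [mul_apply, star_apply, RCLike.star_def, RCLike.mul_conj, one_apply_eq] at hrow
    simp only [of_apply]
    exact_mod_cast hrow
  · have hcol := congrFun (congrFun (mem_unitaryGroup_iff'.mp hW) j) j
    simp only [mul_apply, star_apply, RCLike.star_def, RCLike.conj_mul, one_apply_eq] at hcol
    simp only [of_apply]
    exact_mod_cast hcol

theorem sq_norm_diagonal_mul_sub_mul_diagonal_apply [DecidableEq n] (a b : n → ℝ)
    (W : Matrix n n 𝕜) (i j : n) :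
    ‖(diagonal (RCLike.ofReal ∘ a) * W - W * diagonal (RCLike.ofReal ∘ b) : Matrix n n 𝕜) i j‖ ^ 2
      = ‖W i j‖ ^ 2 * (a i - b j) ^ 2 := by
  rw [sub_apply, diagonal_mul, mul_diagonal, Function.comp_apply, Function.comp_apply,
    mul_comm (W i j), ← sub_mul, ← RCLike.ofReal_sub, norm_mul, RCLike.norm_ofReal, mul_pow,
    sq_abs, mul_comm]

theorem exists_perm_sum_sub_sq_le_sum_sq_norm_sub [DecidableEq n] {U V : Matrix n n 𝕜}
    (hU : U ∈ unitaryGroup n 𝕜) (hV : V ∈ unitaryGroup n 𝕜) (a b : n → ℝ) :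
    ∃ σ : Equiv.Perm n, ∑ i, (a i - b (σ i)) ^ 2 ≤
      ∑ i, ∑ j, ‖(U * diagonal (RCLike.ofReal ∘ a) * star U
        - V * diagonal (RCLike.ofReal ∘ b) * star V : Matrix n n 𝕜) i j‖ ^ 2 := by
  set W := star U * V
  have hW : W ∈ unitaryGroup n 𝕜 := mul_mem (Unitary.star_mem hU) hV
  have hconj : U * diagonal (RCLike.ofReal ∘ a) * star U - V * diagonal (RCLike.ofReal ∘ b) * star V
      = U * (diagonal (RCLike.ofReal ∘ a) * W - W * diagonal (RCLike.ofReal ∘ b)) * star V := by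
    simp only [W, Matrix.mul_sub, Matrix.sub_mul, Matrix.mul_assoc, mem_unitaryGroup_iff.mp hV,
      Matrix.mul_one]
    rw [← Matrix.mul_assoc U (star U), mem_unitaryGroup_iff.mp hU, Matrix.one_mul]
  obtain ⟨σ, hσ⟩ := exists_perm_sum_le_sum_mul_of_mem_doublyStochastic
    (of_sq_norm_mem_doublyStochastic hW) (fun i j => (a i - b j) ^ 2)
  refine ⟨σ, hσ.trans_eq ?_⟩
  simp only [hconj, sum_sq_norm_unitary_mul_mul_star_unitary hU hV,
    sq_norm_diagonal_mul_sub_mul_diagonal_apply, of_apply]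

theorem IsHermitian.exists_perm_sum_eigenvalues_sub_sq_le [DecidableEq n] {A B : Matrix n n 𝕜}
    (hA : A.IsHermitian) (hB : B.IsHermitian) :
    ∃ σ : Equiv.Perm n, ∑ i, (hA.eigenvalues i - hB.eigenvalues (σ i)) ^ 2 ≤
      ∑ i, ∑ j, ‖(A - B) i j‖ ^ 2 := by
  obtain ⟨σ, hσ⟩ := exists_perm_sum_sub_sq_le_sum_sq_norm_sub hA.eigenvectorUnitary.2
    hB.eigenvectorUnitary.2 hA.eigenvalues hB.eigenvalues
  refine ⟨σ, hσ.trans_eq ?_⟩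
  conv_rhs => rw [hA.spectral_theorem, hB.spectral_theorem]
  simp only [Unitary.conjStarAlgAut_apply]

open Polynomial in
theorem IsHermitian.exists_eq_eigenvalues_comp_perm {n : ℕ}
    {A : Matrix (Fin n) (Fin n) 𝕜} (hA : A.IsHermitian) {μ : Fin n → ℝ}
    (h : A.charpoly = ∏ k, (X - C (μ k : 𝕜))) :
    ∃ σ : Equiv.Perm (Fin n), μ = hA.eigenvalues ∘ σ := by
  refine exists_perm_eq_comp_of_map_univ_val_eq
    (Multiset.map_injective (RCLike.ofReal_injective (K := 𝕜)) ?_)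
  rw [Multiset.map_map, Multiset.map_map, ← hA.roots_charpoly_eq_eigenvalues, h,
    roots_prod _ _ (prod_ne_zero_iff.mpr fun k _ => X_sub_C_ne_zero _)]
  simp

end Matrix

open Polynomial in
/-- Hoffman–Wielandt inequality for Hermitian matrices: if `L` and `L'` are Hermitian with
eigenvalues `μ` and `μ'` listed in nondecreasing order (with multiplicity, as the roots of
the characteristic polynomials), then `Σ_k (μ_k - μ'_k)² ≤ ‖L - L'‖_F²`. -/
theorem hoffman_wielandt_hermitian
    (n : ℕ) (L L' : Matrix (Fin n) (Fin n) ℂ)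
    (hL : L.IsHermitian) (hL' : L'.IsHermitian)
    (μ μ' : Fin n → ℝ) (hμ : Monotone μ) (hμ' : Monotone μ')
    (hchar : L.charpoly = ∏ k, (X - C ((μ k : ℂ))))
    (hchar' : L'.charpoly = ∏ k, (X - C ((μ' k : ℂ)))) :
    ∑ k, (μ k - μ' k) ^ 2 ≤ ∑ u, ∑ v, ‖(L - L') u v‖ ^ 2 := by
  obtain ⟨α, rfl⟩ := hL.exists_eq_eigenvalues_comp_perm hchar
  obtain ⟨β, rfl⟩ := hL'.exists_eq_eigenvalues_comp_perm hchar'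
  obtain ⟨σ, hσ⟩ := hL.exists_perm_sum_eigenvalues_sub_sq_le hL'
  calc ∑ k, (hL.eigenvalues (α k) - hL'.eigenvalues (β k)) ^ 2
      ≤ ∑ k, (hL.eigenvalues (α k) - hL'.eigenvalues (β ((α.trans (σ.trans β.symm)) k))) ^ 2 :=
        (hμ.monovary hμ').sum_sub_sq_le_sum_sub_comp_perm_sq _
    _ = ∑ i, (hL.eigenvalues i - hL'.eigenvalues (σ i)) ^ 2 := by
        simp only [Equiv.trans_apply, Equiv.apply_symm_apply]
        exact Equiv.sum_comp α (fun i => (hL.eigenvalues i - hL'.eigenvalues (σ i)) ^ 2)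
    _ ≤ ∑ u, ∑ v, ‖(L - L') u v‖ ^ 2 := hσ
end
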